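/- arXiv:1807.00754 — 3 statements merged into one kernel-verified Lean document; each statement's English description precedes it below -/
import Mathlib

section
/- Let X ⊂ ℝⁿ be a compact set, λ the restriction of Lebesgue measure to X, and μ, ν nonnegative Borel measures with ν absolutely continuous with respect to λ with density in L^∞. If ∫_X g² dμ ≤ γ · ∫_X g² dλ holds for all polynomials g (for some γ ≥ 0) and μ is absolutely continuous with respect to λ with bounded density h, then h ≤ γ λ-almost everywhere on X. -/
/-!
Squares of polynomials approximate every nonnegative continuous function `f` on the compact set
`X`: approximate `√f` uniformly by Stone–Weierstrass. By dominated convergence the hypothesis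
therefore gives `∫_X f h ≤ γ ∫_X f` for every bounded continuous `f ≥ 0`. On a metric space, finite
Borel measures are compared by their integrals against such `f` (closed sets through the outer
approximations of their indicators, then all Borel sets by inner regularity), so
`h • λ ≤ γ • λ` as measures, that is `h ≤ γ` almost everywhere on `X`.
-/

open MeasureTheory ENNReal Filter Topology

open scoped BoundedContinuousFunction NNReal

namespace MeasureTheory

theorem tendsto_setIntegral_mul_of_tendsto_of_abs_le {α : Type*} [MeasurableSpace α]
    {μ : Measure α} {s : Set α} (hs : MeasurableSet s) {u : ℕ → α → ℝ} {v h : α → ℝ}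
    (hu : ∀ k, AEStronglyMeasurable (u k) (μ.restrict s)) (hh : IntegrableOn h s μ) {C : ℝ}
    (huC : ∀ k, ∀ x ∈ s, |u k x| ≤ C) (huv : ∀ x ∈ s, Tendsto (fun k => u k x) atTop (𝓝 (v x))) :
    Tendsto (fun k => ∫ x in s, u k x * h x ∂μ) atTop (𝓝 (∫ x in s, v x * h x ∂μ)) := by
  refine tendsto_integral_of_dominated_convergence (fun x => C * ‖h x‖)
    (fun k => (hu k).mul hh.aestronglyMeasurable) (hh.norm.const_mul C) (fun k => ?_) ?_
  · filter_upwards [ae_restrict_mem hs] with x hx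
    rw [norm_mul]
    exact mul_le_mul_of_nonneg_right (huC k x hx) (norm_nonneg _)
  · filter_upwards [ae_restrict_mem hs] with x hx
    exact (huv x hx).mul_const _

theorem Measure.le_of_forall_lintegral_le {Ω : Type*} [MeasurableSpace Ω]
    [TopologicalSpace Ω] [TopologicalSpace.PseudoMetrizableSpace Ω] [BorelSpace Ω]
    {μ ν : Measure Ω} [IsFiniteMeasure μ] [IsFiniteMeasure ν]
    (h : ∀ f : Ω →ᵇ ℝ≥0, ∫⁻ x, f x ∂μ ≤ ∫⁻ x, f x ∂ν) : μ ≤ ν := by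
  have hclosed {F : Set Ω} (hF : IsClosed F) : μ F ≤ ν F :=
    le_of_tendsto_of_tendsto' (HasOuterApproxClosed.tendsto_lintegral_apprSeq hF μ)
      (HasOuterApproxClosed.tendsto_lintegral_apprSeq hF ν) fun k => h _
  refine Measure.le_iff.2 fun s hs => ENNReal.le_of_forall_pos_le_add fun ε hε _ => ?_
  obtain ⟨F, hFs, hF, hμF⟩ := hs.exists_isClosed_lt_add (measure_ne_top μ s)
    (ENNReal.coe_ne_zero.2 hε.ne')
  calc μ s ≤ μ F + ε := hμF.le
    _ ≤ ν s + ε := add_le_add_left ((hclosed hF).trans (measure_mono hFs)) _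

theorem lintegral_withDensity_ofReal {α : Type*} [MeasurableSpace α]
    {μ : Measure α} {f : α → ℝ≥0} (hf : Measurable f) {u : α → ℝ} (hu : AEMeasurable u μ)
    (hu0 : 0 ≤ᵐ[μ] u) (hfu : Integrable (fun x => f x * u x) μ) :
    ∫⁻ x, f x ∂μ.withDensity (fun x => ENNReal.ofReal (u x)) =
      ENNReal.ofReal (∫ x, f x * u x ∂μ) := by
  rw [lintegral_withDensity_eq_lintegral_mul₀ hu.ennreal_ofReal hf.coe_nnreal_ennreal.aemeasurable,
    ofReal_integral_eq_lintegral_ofReal hfu (hu0.mono fun x hx => mul_nonneg (f x).coe_nonneg hx)]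
  refine lintegral_congr_ae (hu0.mono fun x hx => ?_)
  change _ = ENNReal.ofReal (f x * u x)
  rw [Pi.mul_apply, ENNReal.ofReal_mul (f x).coe_nonneg, ENNReal.ofReal_coe_nnreal, mul_comm]

theorem ae_le_of_forall_integral_mul_le {Ω : Type*} [MeasurableSpace Ω]
    [TopologicalSpace Ω] [TopologicalSpace.PseudoMetrizableSpace Ω] [BorelSpace Ω]
    {μ : Measure Ω} [SigmaFinite μ] {u v : Ω → ℝ} (hu : Integrable u μ) (hv : Integrable v μ)
    (hu0 : 0 ≤ᵐ[μ] u) (hv0 : 0 ≤ᵐ[μ] v)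
    (h : ∀ f : Ω →ᵇ ℝ≥0, ∫ x, f x * u x ∂μ ≤ ∫ x, f x * v x ∂μ) : u ≤ᵐ[μ] v := by
  have := isFiniteMeasure_withDensity_ofReal hu.2
  have := isFiniteMeasure_withDensity_ofReal hv.2
  have hmul {w : Ω → ℝ} (hw : Integrable w μ) (f : Ω →ᵇ ℝ≥0) :
      Integrable (fun x => (f x : ℝ) * w x) μ :=
    hw.bdd_mul (f.continuous.measurable.coe_nnreal_real.aestronglyMeasurable)
      (ae_of_all _ fun x => by simpa using NNReal.coe_le_coe.2 (f.apply_le_nndist_zero x))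
  have hle : μ.withDensity (fun x => ENNReal.ofReal (u x)) ≤
      μ.withDensity (fun x => ENNReal.ofReal (v x)) := by
    refine Measure.le_of_forall_lintegral_le fun f => ?_
    rw [lintegral_withDensity_ofReal f.continuous.measurable hu.aemeasurable hu0 (hmul hu f),
      lintegral_withDensity_ofReal f.continuous.measurable hv.aemeasurable hv0 (hmul hv f)]
    exact ENNReal.ofReal_le_ofReal (h f)
  have hae : (fun x => ENNReal.ofReal (u x)) ≤ᵐ[μ] fun x => ENNReal.ofReal (v x) :=
    ae_le_of_forall_setLIntegral_le_of_sigmaFinite₀ hu.aemeasurable.ennreal_ofReal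
      fun s hs _ => by simpa only [withDensity_apply _ hs] using hle s
  filter_upwards [hae, hv0] with x hx hvx
  exact (ENNReal.ofReal_le_ofReal_iff hvx).1 hx

end MeasureTheory

namespace MvPolynomial

theorem exists_forall_abs_eval_sub_lt {σ : Type*} {K : Set (σ → ℝ)} (hK : IsCompact K)
    {f : (σ → ℝ) → ℝ} (hf : ContinuousOn f K) {ε : ℝ} (hε : 0 < ε) :
    ∃ p : MvPolynomial σ ℝ, ∀ x ∈ K, |eval x p - f x| < ε := by
  have : CompactSpace K := isCompact_iff_compactSpace.mp hK
  let coord (i : σ) : C(K, ℝ) :=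
    ⟨fun x => (x : σ → ℝ) i, (continuous_apply i).comp continuous_subtype_val⟩
  have hsep : (aeval (R := ℝ) coord).range.SeparatesPoints := by
    intro x y hxy
    obtain ⟨i, hi⟩ : ∃ i, (x : σ → ℝ) i ≠ (y : σ → ℝ) i := by
      by_contra! hc
      exact hxy (Subtype.ext (_root_.funext hc))
    exact ⟨coord i, ⟨aeval coord (X i), ⟨X i, rfl⟩, by simp⟩, hi⟩
  have heval (q : MvPolynomial σ ℝ) (x : K) : aeval coord q x = eval (x : σ → ℝ) q := by
    induction q using MvPolynomial.induction_on <;> simp_all [coord]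
  obtain ⟨⟨_, p, rfl⟩, hp⟩ := ContinuousMap.exists_mem_subalgebra_near_continuous_of_separatesPoints
    _ hsep (fun x : K => f x) hf.domRestrict ε hε
  exact ⟨p, fun x hx => by simpa [heval] using hp ⟨x, hx⟩⟩

theorem exists_seq_abs_eval_sq_le_and_tendsto {σ : Type*} {K : Set (σ → ℝ)} (hK : IsCompact K)
    {f : (σ → ℝ) → ℝ} (hf : ContinuousOn f K) (hf0 : ∀ x ∈ K, 0 ≤ f x) :
    ∃ (p : ℕ → MvPolynomial σ ℝ) (C : ℝ), (∀ k, ∀ x ∈ K, |eval x (p k) ^ 2| ≤ C) ∧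
      ∀ x ∈ K, Tendsto (fun k => eval x (p k) ^ 2) atTop (𝓝 (f x)) := by
  have hg : ContinuousOn (fun x => √(f x)) K := hf.sqrt
  obtain ⟨M, hM⟩ := hK.exists_bound_of_continuousOn hg
  choose p hp using fun k : ℕ =>
    exists_forall_abs_eval_sub_lt hK hg (Nat.one_div_pos_of_nat (n := k))
  refine ⟨p, (M + 1) ^ 2, fun k x hx => ?_, fun x hx => ?_⟩
  · have hpx := hp k x hx
    have hMx : |√(f x)| ≤ M := hM x hx
    have hk : (1 : ℝ) / (k + 1) ≤ 1 := by
      rw [div_le_one (by positivity)]; linarith [k.cast_nonneg (α := ℝ)]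
    have hpM : |eval x (p k)| ≤ M + 1 := by
      linarith [abs_sub_abs_le_abs_sub (eval x (p k)) (√(f x))]
    rw [abs_pow]
    exact pow_le_pow_left₀ (abs_nonneg _) hpM 2
  · have hlim : Tendsto (fun k => eval x (p k)) atTop (𝓝 (√(f x))) := by
      exact tendsto_iff_dist_tendsto_zero.2 (squeeze_zero (fun _ => dist_nonneg)
        (fun k => (hp k x hx).le) tendsto_one_div_add_atTop_nhds_zero_nat)
    simpa [Real.sq_sqrt (hf0 x hx)] using hlim.pow 2

end MvPolynomial

theorem setIntegral_mul_le_of_forall_eval_sq {σ : Type*} [Countable σ] {μ : Measure (σ → ℝ)}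
    [IsFiniteMeasureOnCompacts μ] {K : Set (σ → ℝ)} (hK : IsCompact K) {h : (σ → ℝ) → ℝ}
    (hh : IntegrableOn h K μ) {γ : ℝ}
    (hdom : ∀ p : MvPolynomial σ ℝ,
      ∫ x in K, MvPolynomial.eval x p ^ 2 * h x ∂μ ≤ γ * ∫ x in K, MvPolynomial.eval x p ^ 2 ∂μ)
    {f : (σ → ℝ) → ℝ} (hf : ContinuousOn f K) (hf0 : ∀ x ∈ K, 0 ≤ f x) :
    ∫ x in K, f x * h x ∂μ ≤ γ * ∫ x in K, f x ∂μ := by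
  obtain ⟨p, C, hpC, hpf⟩ := MvPolynomial.exists_seq_abs_eval_sq_le_and_tendsto hK hf hf0
  have hp k : AEStronglyMeasurable (fun x => MvPolynomial.eval x (p k) ^ 2) (μ.restrict K) :=
    ((MvPolynomial.continuous_eval (p k)).pow 2).aestronglyMeasurable
  have hlim_h := tendsto_setIntegral_mul_of_tendsto_of_abs_le hK.measurableSet hp hh hpC hpf
  have hlim_one := tendsto_setIntegral_mul_of_tendsto_of_abs_le hK.measurableSet hp
    (integrableOn_const (C := (1 : ℝ)) hK.measure_lt_top.ne) hpC hpf
  simp only [mul_one] at hlim_one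
  exact le_of_tendsto_of_tendsto' hlim_h (hlim_one.const_mul γ) fun k => hdom (p k)

theorem stmt3 (n : ℕ) (X : Set (Fin n → ℝ)) (hX : IsCompact X)
    (γ : ℝ) (hγ : 0 ≤ γ)
    (h : (Fin n → ℝ) → ℝ) (hh0 : ∀ x, 0 ≤ h x) (hhm : Measurable h)
    (hbd : ∃ C : ℝ, ∀ x, h x ≤ C)
    (hdom : ∀ g : MvPolynomial (Fin n) ℝ,
      ∫ x in X, (MvPolynomial.eval x g) ^ 2 * h x
        ≤ γ * ∫ x in X, (MvPolynomial.eval x g) ^ 2) :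
    ∀ᵐ x ∂(volume.restrict X), h x ≤ γ := by
  have : IsFiniteMeasure (volume.restrict X) := isFiniteMeasure_restrict.2 hX.measure_lt_top.ne
  obtain ⟨C, hC⟩ := hbd
  have hh : IntegrableOn h X := Integrable.of_bound hhm.aestronglyMeasurable C
    (ae_of_all _ fun x => (Real.norm_of_nonneg (hh0 x)).trans_le (hC x))
  refine ae_le_of_forall_integral_mul_le hh (integrable_const γ) (ae_of_all _ hh0)
    (ae_of_all _ fun _ => hγ) fun f => ?_
  rw [integral_mul_const, mul_comm]
  exact setIntegral_mul_le_of_forall_eval_sq hX hh hdom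
    (NNReal.continuous_coe.comp f.continuous).continuousOn fun x _ => (f x).coe_nonneg
end

section
/- Let μ be a finite nonnegative Borel measure on a compact set X ⊂ ℝⁿ whose moment matrix M_r(u) of order r is positive definite, and let g(x) = Ax + b be an invertible affine map of ℝⁿ. Then the pushforward measure μ̃ = g_#μ has positive definite moment matrix of order r, and the Christoffel polynomials satisfy p_{μ̃, r}(A x + b) = p_{μ, r}(x) for all x ∈ X, where p_{μ,r}(x) = v_r(x)ᵀ M_r(u)⁻¹ v_r(x) and v_r(x) is the vector of all monomials of degree at most r. -/
/-!
Substituting `x ↦ A x + b` into a monomial of degree at most `r` yields a polynomial of degree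
at most `r`, so `v_r(A x + b) = G v_r(x)` for a fixed matrix `G`, and the moment matrix of the
pushforward is `G M Gᵀ`. The inverse affine map gives a matrix `H` with `H G v_r(x) = v_r(x)` for
all `x`; since `cᵀ M c = ∫ (cᵀ v_r)² dμ`, positive definiteness of `M` makes the monomials
linearly independent on the support of `μ`, whence `H G = 1`. So `G` is invertible, `G M Gᵀ` is
positive definite, and `(G v)ᵀ (G M Gᵀ)⁻¹ (G v) = vᵀ M⁻¹ v`.
-/

open MeasureTheory

/-- Index set for monomials of degree at most `r` in `n` variables. -/
abbrev Idx (n r : ℕ) := {α : Fin n → Fin (r + 1) // ∑ i, (α i : ℕ) ≤ r}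

/-- The vector of all monomials of degree at most `r` evaluated at `x`. -/
def vmon (n r : ℕ) (x : Fin n → ℝ) : Idx n r → ℝ := fun a => ∏ i, x i ^ (a.1 i : ℕ)

/-- The order-`r` moment matrix of a measure `μ`. -/
noncomputable def momMat (n r : ℕ) (μ : Measure (Fin n → ℝ)) :
    Matrix (Idx n r) (Idx n r) ℝ :=
  fun a b => ∫ x, vmon n r x a * vmon n r x b ∂μ

/-- The Christoffel polynomial `p_{μ,r}(x) = v_r(x)ᵀ M_r(u)⁻¹ v_r(x)`. -/
noncomputable def christoffel (n r : ℕ) (μ : Measure (Fin n → ℝ))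
    (x : Fin n → ℝ) : ℝ :=
  dotProduct (vmon n r x) ((momMat n r μ)⁻¹.mulVec (vmon n r x))

open Matrix MvPolynomial

namespace Idx

variable {n r : ℕ}

noncomputable def toFinsupp (c : Idx n r) : Fin n →₀ ℕ :=
  Finsupp.equivFunOnFinite.symm fun i => (c.1 i : ℕ)

lemma toFinsupp_injective : Function.Injective (toFinsupp : Idx n r → Fin n →₀ ℕ) := by
  intro c d h
  ext i
  exact DFunLike.congr_fun h i

lemma exists_toFinsupp_eq {d : Fin n →₀ ℕ} (hd : ∑ i, d i ≤ r) :
    ∃ c : Idx n r, c.toFinsupp = d :=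
  have hle (i : Fin n) : d i ≤ r :=
    (Finset.single_le_sum (fun j _ => Nat.zero_le (d j)) (Finset.mem_univ i)).trans hd
  ⟨⟨fun i => ⟨d i, Nat.lt_succ_of_le (hle i)⟩, hd⟩, Finsupp.ext fun _ => rfl⟩

end Idx

section Polynomial

variable {n r : ℕ}

lemma continuous_vmon_apply (a : Idx n r) : Continuous fun x => vmon n r x a := by
  unfold vmon
  fun_prop

lemma eval_eq_sum_coeff_mul_vmon {P : MvPolynomial (Fin n) ℝ} (hP : P.totalDegree ≤ r)
    (x : Fin n → ℝ) : eval x P = ∑ c : Idx n r, coeff (Idx.toFinsupp c) P * vmon n r x c := by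
  have hsupp : P.support ⊆ Finset.univ.image (Idx.toFinsupp : Idx n r → _) := by
    intro d hd
    have hdeg : ∑ i, d i ≤ r := by
      simpa [Finsupp.sum_fintype] using (le_totalDegree hd).trans hP
    obtain ⟨c, rfl⟩ := Idx.exists_toFinsupp_eq hdeg
    exact Finset.mem_image_of_mem _ (Finset.mem_univ c)
  rw [eval_eq', Finset.sum_subset hsupp fun d _ hd => by simp [notMem_support_iff.mp hd],
    Finset.sum_image fun c _ d _ h => Idx.toFinsupp_injective h]
  rfl

noncomputable def substMat (n r : ℕ) (p : Fin n → MvPolynomial (Fin n) ℝ) :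
    Matrix (Idx n r) (Idx n r) ℝ :=
  fun a c => coeff c.toFinsupp (∏ i, p i ^ (a.1 i : ℕ))

lemma vmon_eval_eq_substMat_mulVec {p : Fin n → MvPolynomial (Fin n) ℝ}
    (hp : ∀ i, (p i).totalDegree ≤ 1) (x : Fin n → ℝ) :
    vmon n r (fun i => eval x (p i)) = substMat n r p *ᵥ vmon n r x := by
  funext a
  have hdeg : (∏ i, p i ^ (a.1 i : ℕ)).totalDegree ≤ r :=
    calc (∏ i, p i ^ (a.1 i : ℕ)).totalDegree
        ≤ ∑ i, (a.1 i : ℕ) * (p i).totalDegree :=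
          (totalDegree_finsetProd _ _).trans (Finset.sum_le_sum fun i _ => totalDegree_pow _ _)
      _ ≤ ∑ i, (a.1 i : ℕ) :=
          Finset.sum_le_sum fun i _ => (Nat.mul_le_mul_left _ (hp i)).trans_eq (mul_one _)
      _ ≤ r := a.2
  have hexpand := eval_eq_sum_coeff_mul_vmon hdeg x
  simp only [map_prod, map_pow] at hexpand
  exact hexpand

noncomputable def affinePoly (A : Matrix (Fin n) (Fin n) ℝ) (b : Fin n → ℝ) (i : Fin n) :
    MvPolynomial (Fin n) ℝ :=
  ∑ j, C (A i j) * X j + C (b i)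

lemma eval_affinePoly (A : Matrix (Fin n) (Fin n) ℝ) (b : Fin n → ℝ) (x : Fin n → ℝ) :
    (fun i => eval x (affinePoly A b i)) = A *ᵥ x + b := by
  funext i
  simp [affinePoly, mulVec, dotProduct]

lemma totalDegree_affinePoly_le (A : Matrix (Fin n) (Fin n) ℝ) (b : Fin n → ℝ) (i : Fin n) :
    (affinePoly A b i).totalDegree ≤ 1 := by
  refine (totalDegree_add _ _).trans (max_le ?_ (by simp))
  refine (totalDegree_finsetSum _ _).trans (Finset.sup_le fun j _ => ?_)
  exact (totalDegree_mul _ _).trans (by simp)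

lemma vmon_affine (A : Matrix (Fin n) (Fin n) ℝ) (b : Fin n → ℝ) (x : Fin n → ℝ) :
    vmon n r (A *ᵥ x + b) = substMat n r (affinePoly A b) *ᵥ vmon n r x := by
  rw [← eval_affinePoly, vmon_eval_eq_substMat_mulVec (totalDegree_affinePoly_le A b)]

end Polynomial

lemma integrable_of_continuous_of_compact_support {α : Type*} [TopologicalSpace α]
    [MeasurableSpace α] [OpensMeasurableSpace α] {X : Set α} {μ : Measure α}
    [IsFiniteMeasure μ] (hX : IsCompact X) (hsupp : μ Xᶜ = 0) {f : α → ℝ}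
    (hf : Continuous f) : Integrable f μ := by
  obtain ⟨C, hC⟩ := hX.exists_bound_of_continuousOn hf.continuousOn
  have hae : ∀ᵐ x ∂μ, x ∈ X := ae_iff.mpr hsupp
  exact (integrable_const C).mono' hf.aestronglyMeasurable (hae.mono hC)

section Moments

variable {n r : ℕ} {X : Set (Fin n → ℝ)} {μ : Measure (Fin n → ℝ)} [IsFiniteMeasure μ]

lemma integral_dotProduct_vmon_mul (hX : IsCompact X) (hsupp : μ Xᶜ = 0)
    (c d : Idx n r → ℝ) :
    ∫ x, (c ⬝ᵥ vmon n r x) * (d ⬝ᵥ vmon n r x) ∂μ = c ⬝ᵥ momMat n r μ *ᵥ d := by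
  have hint (a e : Idx n r) : Integrable (fun x => vmon n r x a * vmon n r x e) μ :=
    integrable_of_continuous_of_compact_support hX hsupp
      ((continuous_vmon_apply a).mul (continuous_vmon_apply e))
  have hexpand (x : Fin n → ℝ) : (c ⬝ᵥ vmon n r x) * (d ⬝ᵥ vmon n r x)
      = ∑ a, ∑ e, c a * d e * (vmon n r x a * vmon n r x e) := by
    simp only [dotProduct, Finset.sum_mul_sum]
    exact Finset.sum_congr rfl fun _ _ => Finset.sum_congr rfl fun _ _ => by ring
  simp_rw [hexpand]
  rw [integral_finsetSum _ fun a _ => integrable_finsetSum _ fun e _ => (hint a e).const_mul _]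
  simp_rw [integral_finsetSum _ fun e _ => (hint _ e).const_mul _, integral_const_mul]
  simp only [dotProduct, mulVec, Finset.mul_sum, momMat]
  exact Finset.sum_congr rfl fun _ _ => Finset.sum_congr rfl fun _ _ => by ring

lemma eq_zero_of_forall_dotProduct_vmon_eq_zero (hX : IsCompact X) (hsupp : μ Xᶜ = 0)
    (hM : (momMat n r μ).PosDef) {c : Idx n r → ℝ} (hc : ∀ x, c ⬝ᵥ vmon n r x = 0) :
    c = 0 := by
  by_contra hne
  have hpos := hM.dotProduct_mulVec_pos hne
  rw [star_trivial, ← integral_dotProduct_vmon_mul hX hsupp] at hpos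
  simp [hc] at hpos

lemma momMat_map (hX : IsCompact X) (hsupp : μ Xᶜ = 0) {g : (Fin n → ℝ) → (Fin n → ℝ)}
    (hg : Continuous g) {G : Matrix (Idx n r) (Idx n r) ℝ}
    (hG : ∀ x, vmon n r (g x) = G *ᵥ vmon n r x) :
    momMat n r (μ.map g) = G * momMat n r μ * Gᵀ := by
  ext a c
  have hmeas : AEStronglyMeasurable (fun x => vmon n r x a * vmon n r x c) (μ.map g) :=
    ((continuous_vmon_apply a).mul (continuous_vmon_apply c)).aestronglyMeasurable
  rw [momMat, integral_map hg.aemeasurable hmeas, mul_mul_apply, transpose_transpose]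
  simp only [hG]
  exact integral_dotProduct_vmon_mul hX hsupp (G a) (G c)

end Moments

lemma Matrix.mulVec_dotProduct_inv_conj_transpose_mulVec {m R : Type*} [Fintype m]
    [DecidableEq m] [CommRing R]
    {G : Matrix m m R} (hG : IsUnit G) (M : Matrix m m R) (v : m → R) :
    G *ᵥ v ⬝ᵥ (G * M * Gᵀ)⁻¹ *ᵥ (G *ᵥ v) = v ⬝ᵥ M⁻¹ *ᵥ v := by
  have hGdet : IsUnit G.det := (isUnit_iff_isUnit_det G).mp hG
  rw [mul_inv_rev, mul_inv_rev, ← transpose_nonsing_inv, mulVec_mulVec, Matrix.mul_assoc,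
    Matrix.mul_assoc, nonsing_inv_mul _ hGdet, Matrix.mul_one, ← mulVec_mulVec,
    dotProduct_mulVec, vecMul_transpose, mulVec_mulVec, nonsing_inv_mul _ hGdet, one_mulVec]

section Affine

variable {n r : ℕ} {X : Set (Fin n → ℝ)} {μ : Measure (Fin n → ℝ)} [IsFiniteMeasure μ]

lemma eq_of_forall_mulVec_vmon_eq {m : Type*} (hX : IsCompact X) (hsupp : μ Xᶜ = 0)
    (hM : (momMat n r μ).PosDef) {B C : Matrix m (Idx n r) ℝ}
    (h : ∀ x, B *ᵥ vmon n r x = C *ᵥ vmon n r x) : B = C := by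
  ext i a
  suffices B i - C i = 0 from congrFun (sub_eq_zero.mp this) a
  refine eq_zero_of_forall_dotProduct_vmon_eq_zero hX hsupp hM fun x => ?_
  rw [sub_dotProduct, sub_eq_zero]
  exact congrFun (h x) i

lemma isUnit_substMat_affinePoly (hX : IsCompact X) (hsupp : μ Xᶜ = 0)
    (hM : (momMat n r μ).PosDef) {A : Matrix (Fin n) (Fin n) ℝ} (hA : IsUnit A.det)
    (b : Fin n → ℝ) : IsUnit (substMat n r (affinePoly A b)) := by
  set G := substMat n r (affinePoly A b)
  set H := substMat n r (affinePoly A⁻¹ (-(A⁻¹ *ᵥ b)))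
  have hinv (x : Fin n → ℝ) : A⁻¹ *ᵥ (A *ᵥ x + b) + -(A⁻¹ *ᵥ b) = x := by
    rw [mulVec_add, mulVec_mulVec, nonsing_inv_mul A hA, one_mulVec, add_neg_cancel_right]
  have hHG : H * G = 1 := eq_of_forall_mulVec_vmon_eq hX hsupp hM fun x => by
    rw [← mulVec_mulVec, ← vmon_affine, ← vmon_affine, hinv, one_mulVec]
  exact (isUnit_iff_isUnit_det G).mpr (isUnit_det_of_left_inverse hHG)

end Affine

theorem stmt13 (n r : ℕ) (X : Set (Fin n → ℝ)) (hX : IsCompact X)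
    (μ : Measure (Fin n → ℝ)) [IsFiniteMeasure μ] (hsupp : μ Xᶜ = 0)
    (A : Matrix (Fin n) (Fin n) ℝ) (hA : IsUnit A.det) (b : Fin n → ℝ)
    (hM : (momMat n r μ).PosDef) :
    (momMat n r (μ.map fun x => A.mulVec x + b)).PosDef ∧
      ∀ x ∈ X, christoffel n r (μ.map fun x => A.mulVec x + b) (A.mulVec x + b)
        = christoffel n r μ x := by
  have hG := isUnit_substMat_affinePoly hX hsupp hM hA b
  have hmap := momMat_map hX hsupp (by fun_prop) (vmon_affine (r := r) A b)
  refine ⟨?_, fun x _ => ?_⟩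
  · rw [hmap, ← conjTranspose_eq_transpose_of_trivial, ← star_eq_conjTranspose]
    exact hG.posDef_star_right_conjugate_iff.mpr hM
  · rw [christoffel, christoffel, hmap, vmon_affine,
      mulVec_dotProduct_inv_conj_transpose_mulVec hG]
end

section
/- The function h*(x) = 2/(1+x)² is an invariant probability density for the piecewise map f on [0,1] defined by f(x) = 2x/(1−x) for x ∈ [0, 1/3] and f(x) = (1−x)/(2x) for x ∈ [1/3, 1]; that is, the probability measure dμ = h* dλ satisfies f_#μ = μ. -/
/-!
The distribution function of `μ = h* dλ` is `F t = μ [0, t] = 2t/(1 + t)`. For `0 ≤ t < 1` the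
set `{f ≤ t}` meets `[0, 1]` in `[0, t/(2 + t)] ∪ [1/(1 + 2t), 1]`, one interval for each
branch, and `F (t/(2 + t)) + 1 - F (1/(1 + 2t)) = F t`. Since `f` maps `[0, 1]` into itself,
`f_# μ` and `μ` are probability measures on `[0, 1]` with the same distribution function.
-/

open MeasureTheory Set

theorem MeasureTheory.Measure.ext_of_Iic_of_ae_mem_Icc {μ ν : Measure ℝ} [IsFiniteMeasure μ]
    [IsFiniteMeasure ν] {a b : ℝ} (hμ : ∀ᵐ x ∂μ, x ∈ Icc a b)
    (hν : ∀ᵐ x ∂ν, x ∈ Icc a b)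
    (huniv : μ univ = ν univ) (h : ∀ t ∈ Ico a b, μ (Iic t) = ν (Iic t)) : μ = ν := by
  refine Measure.ext_of_Iic μ ν fun t => ?_
  rcases lt_or_ge t a with hta | hat
  · have hnull {m : Measure ℝ} (hm : ∀ᵐ x ∂m, x ∈ Icc a b) : m (Iic t) = 0 :=
      measure_mono_null (t := {x | x ∉ Icc a b})
        (fun x (hx : x ≤ t) (hxab : x ∈ Icc a b) => by linarith [hxab.1]) (ae_iff.1 hm)
    rw [hnull hμ, hnull hν]
  rcases lt_or_ge t b with htb | hbt
  · exact h t ⟨hat, htb⟩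
  · have hfull {m : Measure ℝ} [IsFiniteMeasure m] (hm : ∀ᵐ x ∂m, x ∈ Icc a b) :
        m (Iic t) = m univ :=
      (ae_iff_measure_eq measurableSet_Iic.nullMeasurableSet).1 <|
        hm.mono fun x hx => hx.2.trans hbt
    rw [hfull hμ, hfull hν, huniv]

noncomputable section

def hStar (x : ℝ) : ℝ := 2 / (1 + x) ^ 2

def muStar : Measure ℝ :=
  (volume.restrict (Icc (0 : ℝ) 1)).withDensity fun x => ENNReal.ofReal (hStar x)

def fMap (x : ℝ) : ℝ := if x ≤ 1 / 3 then 2 * x / (1 - x) else (1 - x) / (2 * x)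

end

theorem continuousOn_hStar : ContinuousOn hStar (Ioi (-1)) :=
  continuousOn_const.div (by fun_prop) fun x (hx : -1 < x) => by
    have : 1 + x ≠ 0 := by linarith
    positivity

theorem integral_hStar {a b : ℝ} (ha : -1 < a) (hab : a ≤ b) :
    ∫ x in a..b, hStar x = 2 / (1 + a) - 2 / (1 + b) := by
  have hsub : uIcc a b ⊆ Ioi (-1) := by
    rw [uIcc_of_le hab]
    exact Icc_subset_Ioi_iff hab |>.2 ha
  have hderiv : ∀ x ∈ uIcc a b, HasDerivAt (fun y => -2 / (1 + y)) (hStar x) x := by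
    intro x hx
    have hx0 : 1 + x ≠ 0 := by linarith [show -1 < x from hsub hx]
    refine ((hasDerivAt_const x (-2 : ℝ)).div ((hasDerivAt_id x).const_add 1) hx0).congr_deriv ?_
    simp [hStar]
  rw [intervalIntegral.integral_eq_sub_of_hasDerivAt hderiv
    ((continuousOn_hStar.mono hsub).intervalIntegrable)]
  ring

theorem ae_muStar_mem_Icc : ∀ᵐ x ∂muStar, x ∈ Icc (0 : ℝ) 1 :=
  (withDensity_absolutelyContinuous _ _).ae_le (ae_restrict_mem measurableSet_Icc)

theorem muStar_Icc {a b : ℝ} (ha : 0 ≤ a) (hab : a ≤ b) (hb : b ≤ 1) :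
    muStar (Icc a b) = ENNReal.ofReal (2 / (1 + a) - 2 / (1 + b)) := by
  have hint : IntegrableOn hStar (Icc a b) :=
    (continuousOn_hStar.mono (Icc_subset_Ioi_iff hab |>.2 (by linarith))).integrableOn_Icc
  rw [muStar, withDensity_apply _ measurableSet_Icc, Measure.restrict_restrict measurableSet_Icc,
    inter_eq_left.2 (Icc_subset_Icc ha hb), ← ofReal_integral_eq_lintegral_ofReal hint
      (Filter.Eventually.of_forall fun x => by unfold hStar; positivity),
    integral_Icc_eq_integral_Ioc, ← intervalIntegral.integral_of_le hab,
    integral_hStar (by linarith) hab]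

instance isProbabilityMeasure_muStar : IsProbabilityMeasure muStar := by
  constructor
  rw [← measure_inter_conull (s := univ) (t := Icc 0 1) ae_muStar_mem_Icc, univ_inter,
    muStar_Icc le_rfl zero_le_one le_rfl]
  norm_num

theorem measurable_fMap : Measurable fMap :=
  Measurable.ite measurableSet_Iic (by fun_prop) (by fun_prop)

theorem mapsTo_fMap : MapsTo fMap (Icc 0 1) (Icc 0 1) := by
  rintro x ⟨hx0, hx1⟩
  unfold fMap
  split_ifs with hx
  · exact ⟨by positivity, by rw [div_le_one (by linarith)]; linarith⟩
  · exact ⟨div_nonneg (by linarith) (by linarith), by rw [div_le_one (by linarith)]; linarith⟩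

theorem fMap_le_iff_of_le_one_third {x t : ℝ} (ht : 0 ≤ t) (hx : x ≤ 1 / 3) :
    fMap x ≤ t ↔ x ≤ t / (2 + t) := by
  rw [fMap, if_pos hx, div_le_iff₀ (by linarith), le_div_iff₀ (by linarith)]
  constructor <;> intro h <;> linarith

theorem fMap_le_iff_of_one_third_lt {x t : ℝ} (ht : 0 ≤ t) (hx : 1 / 3 < x) :
    fMap x ≤ t ↔ 1 / (1 + 2 * t) ≤ x := by
  rw [fMap, if_neg hx.not_ge, div_le_iff₀ (by linarith), div_le_iff₀ (by linarith)]
  constructor <;> intro h <;> linarith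

theorem fMap_preimage_Iic_inter_Icc {t : ℝ} (ht0 : 0 ≤ t) (ht1 : t < 1) :
    fMap ⁻¹' Iic t ∩ Icc 0 1 = Icc 0 (t / (2 + t)) ∪ Icc (1 / (1 + 2 * t)) 1 := by
  have hA : t / (2 + t) ≤ 1 / 3 := by rw [div_le_iff₀ (by linarith)]; linarith
  have hB : 1 / 3 < 1 / (1 + 2 * t) := by rw [lt_div_iff₀ (by linarith)]; linarith
  ext x
  simp only [mem_inter_iff, mem_preimage, mem_Iic, mem_Icc, mem_union]
  rcases le_or_gt x (1 / 3) with hx | hx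
  · rw [fMap_le_iff_of_le_one_third ht0 hx]
    constructor
    · rintro ⟨hxA, hx0, -⟩
      exact Or.inl ⟨hx0, hxA⟩
    · rintro (⟨hx0, hxA⟩ | ⟨hBx, -⟩)
      · exact ⟨hxA, hx0, by linarith⟩
      · linarith
  · rw [fMap_le_iff_of_one_third_lt ht0 hx]
    constructor
    · rintro ⟨hBx, -, hx1⟩
      exact Or.inr ⟨hBx, hx1⟩
    · rintro (⟨-, hxA⟩ | ⟨hBx, hx1⟩)
      · linarith
      · exact ⟨hBx, by linarith, hx1⟩

theorem muStar_preimage_fMap_Iic {t : ℝ} (ht0 : 0 ≤ t) (ht1 : t < 1) :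
    muStar (fMap ⁻¹' Iic t) = muStar (Iic t) := by
  set A := t / (2 + t)
  set B := 1 / (1 + 2 * t)
  have hA : 0 ≤ A := by positivity
  have hAB : A < B := by
    rw [div_lt_div_iff₀ (by linarith) (by linarith)]; nlinarith
  have hB : B ≤ 1 := by rw [div_le_one (by linarith)]; linarith
  have hIic : Iic t ∩ Icc 0 1 = Icc 0 t := by
    ext x
    exact ⟨fun h => ⟨h.2.1, h.1⟩, fun h => ⟨h.2, h.1, h.2.trans ht1.le⟩⟩
  have hdisj : Disjoint (Icc 0 A) (Icc B 1) :=
    disjoint_left.2 fun x hxA hxB => by linarith [hxA.2, hxB.1]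
  rw [← measure_inter_conull (t := Icc 0 1) ae_muStar_mem_Icc,
    fMap_preimage_Iic_inter_Icc ht0 ht1,
    measure_union hdisj measurableSet_Icc, muStar_Icc le_rfl hA (by linarith),
    muStar_Icc (by linarith) hB le_rfl, ← measure_inter_conull (t := Icc 0 1) ae_muStar_mem_Icc,
    hIic, muStar_Icc le_rfl ht0 ht1.le, ← ENNReal.ofReal_add]
  · congr 1
    simp only [A, B]
    field_simp
    ring
  all_goals exact sub_nonneg.2 (div_le_div_of_nonneg_left zero_le_two (by linarith) (by linarith))

theorem map_fMap_muStar : muStar.map fMap = muStar := by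
  refine Measure.ext_of_Iic_of_ae_mem_Icc ?_ ae_muStar_mem_Icc ?_ fun t ht => ?_
  · exact (ae_map_iff measurable_fMap.aemeasurable measurableSet_Icc).2 <|
      ae_muStar_mem_Icc.mono fun x hx => mapsTo_fMap hx
  · rw [Measure.map_apply measurable_fMap .univ, preimage_univ]
  · rw [Measure.map_apply measurable_fMap measurableSet_Iic]
    exact muStar_preimage_fMap_Iic ht.1 ht.2

theorem stmt18 :
    IsProbabilityMeasure
      ((volume.restrict (Set.Icc (0:ℝ) 1)).withDensity
        (fun x => ENNReal.ofReal (2 / (1 + x) ^ 2))) ∧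
    ((volume.restrict (Set.Icc (0:ℝ) 1)).withDensity
        (fun x => ENNReal.ofReal (2 / (1 + x) ^ 2))).map
      (fun x => if x ≤ 1 / 3 then 2 * x / (1 - x) else (1 - x) / (2 * x))
    = (volume.restrict (Set.Icc (0:ℝ) 1)).withDensity
        (fun x => ENNReal.ofReal (2 / (1 + x) ^ 2)) := by
  change IsProbabilityMeasure muStar ∧ muStar.map fMap = muStar
  exact ⟨inferInstance, map_fMap_muStar⟩
end
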